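/- For every n ≥ 4, the graph Cay(Z_n × R_2, {1} × R_2) ≅ C_n[K̄_2] contains a subdivision of K_{3,3}, and hence is not planar. -/

import Mathlib

open SimpleGraph

variable {V : Type*}

/-- Dart reversal as a permutation of the darts of a graph. -/
def dartSymm (G : SimpleGraph V) : Equiv.Perm G.Dart :=
  ⟨SimpleGraph.Dart.symm, SimpleGraph.Dart.symm,
    fun d => SimpleGraph.Dart.symm_symm d, fun d => SimpleGraph.Dart.symm_symm d⟩

/-- A rotation system (combinatorial 2-cell embedding into an orientable surface)
of a graph: a permutation of the darts fixing tails, whose cycle at each vertex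
consists of all darts with that tail. -/
structure RotationSystem (G : SimpleGraph V) where
  rot : Equiv.Perm G.Dart
  tail_rot : ∀ d : G.Dart, (rot d).toProd.1 = d.toProd.1
  single_cycle : ∀ d d' : G.Dart, d.toProd.1 = d'.toProd.1 → rot.SameCycle d d'

/-- The face permutation of a rotation system: first reverse a dart, then rotate. -/
noncomputable def RotationSystem.facePerm {G : SimpleGraph V} (rs : RotationSystem G) :
    Equiv.Perm G.Dart :=
  (dartSymm G).trans rs.rot

/-- The faces of the embedding are the cycles of the face permutation. -/
noncomputable def RotationSystem.numFaces {G : SimpleGraph V} (rs : RotationSystem G) : ℕ :=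
  Set.ncard (Set.range fun d : G.Dart => {d' | rs.facePerm.SameCycle d d'})

/-- The Euler characteristic `n - m + f` of the embedded graph. -/
noncomputable def RotationSystem.eulerChar {G : SimpleGraph V} (rs : RotationSystem G) : ℤ :=
  (Nat.card V : ℤ) - (G.edgeSet.ncard : ℤ) + (rs.numFaces : ℤ)

/-- The genus of the embedding, via `n - m + f = 2 - 2g`. -/
noncomputable def RotationSystem.genus {G : SimpleGraph V} (rs : RotationSystem G) : ℤ :=
  (2 - rs.eulerChar) / 2

/-- The undirected simple Cayley graph of a semigroup `S` with connection set `C`. -/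
def cayleyGraph (S : Type*) [Semigroup S] (C : Set S) : SimpleGraph S where
  Adj a b := a ≠ b ∧ ∃ c ∈ C, (a * c = b ∨ b * c = a)
  symm := ⟨by
    rintro a b ⟨hne, c, hc, h⟩
    exact ⟨hne.symm, c, hc, h.symm⟩⟩
  loopless := ⟨fun a h => h.1 rfl⟩

/-- The lexicographic product of simple graphs. -/
def lexProd {α β : Type*} (X : SimpleGraph α) (Y : SimpleGraph β) :
    SimpleGraph (α × β) where
  Adj p q := X.Adj p.1 q.1 ∨ (p.1 = q.1 ∧ Y.Adj p.2 q.2)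
  symm := ⟨by
    rintro p q (h | ⟨h, h'⟩)
    · exact Or.inl h.symm
    · exact Or.inr ⟨h.symm, h'.symm⟩⟩
  loopless := ⟨by
    rintro p (h | ⟨-, h⟩)
    · exact X.loopless.irrefl _ h
    · exact Y.loopless.irrefl _ h⟩

/-- `G` contains a subdivision of `H`: there are branch vertices given by an
injective map `f` and internally disjoint paths in `G` joining the images of
the endpoints of each edge of `H`. -/
def ContainsSubdivision {α β : Type*} (H : SimpleGraph α) (G : SimpleGraph β) : Prop :=
  ∃ (f : α → β) (P : ∀ ⦃u v : α⦄, H.Adj u v → G.Walk (f u) (f v)),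
    Function.Injective f ∧
    (∀ ⦃u v⦄ (h : H.Adj u v), (P h).IsPath) ∧
    (∀ ⦃u v⦄ (h : H.Adj u v) (x : β),
      x ∈ (P h).support → x ∈ Set.range f → x = f u ∨ x = f v) ∧
    (∀ ⦃u v u' v'⦄ (h : H.Adj u v) (h' : H.Adj u' v'), s(u, v) ≠ s(u', v') →
      ∀ x : β, x ∈ (P h).support → x ∈ (P h').support →
        (x = f u ∨ x = f v) ∧ (x = f u' ∨ x = f v'))

/-!
For the subdivision take the branch vertices `(1,0), (1,1), (3,0)` and `(0,0), (2,0), (2,1)`: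
eight of the nine required connections are edges of `C_n[K̄_2]`, and the ninth, from `(3,0)` to
`(0,0)`, runs along the layer `(3,0), (4,0), …, (n-1,0), (0,0)`, whose interior avoids the
columns `0, …, 3` used by the branch vertices.

For non-planarity: `C_n[K̄_2]` has `2n` vertices and `4n` edges, and for `n ≥ 4` it is
triangle-free with minimum degree `4`. Hence in any rotation system every face has length at
least `4`, so `4F ≤ 2E = 8n` and `V - E + F ≤ 2n - 4n + 2n = 0 < 2`.
-/

namespace Equiv.Perm

variable {α : Type*} (σ : Perm α)

lemma le_ncard_sameCycle [Finite α] {N : ℕ} {x : α} (h : ∀ k, 0 < k → k < N → (σ ^ k) x ≠ x) :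
    N ≤ {y | σ.SameCycle x y}.ncard := by
  have hinj : Set.InjOn (fun k => (σ ^ k) x) (Set.Iio N) := by
    intro i hi j hj hij
    by_contra hne
    wlog hlt : i < j generalizing i j
    · exact this hj hi hij.symm (Ne.symm hne) (by omega)
    refine h (j - i) (by omega) (by simp only [Set.mem_Iio] at hj; omega) ((σ ^ i).injective ?_)
    simp only at hij
    rw [← Perm.mul_apply, ← pow_add, Nat.add_sub_cancel' hlt.le, hij]
  calc N = (Set.Iio N).ncard := (Set.ncard_Iio_nat N).symm
    _ ≤ _ := Set.ncard_le_ncard_of_injOn (fun k => (σ ^ k) x)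
      (fun _ _ => sameCycle_pow_right.2 (SameCycle.refl _ _)) hinj (Set.toFinite _)

lemma mul_ncard_range_sameCycle_le [Finite α] {N : ℕ}
    (h : ∀ x, N ≤ {y | σ.SameCycle x y}.ncard) :
    N * (Set.range fun x => {y | σ.SameCycle x y}).ncard ≤ Nat.card α := by
  classical
  have := Fintype.ofFinite α
  rw [← Set.image_univ, ← Finset.coe_univ, ← Finset.coe_image, Set.ncard_coe_finset,
    Nat.card_eq_fintype_card, ← Finset.card_univ]
  refine Finset.mul_card_image_le_card _ _ fun _ hs => ?_
  obtain ⟨x, -, rfl⟩ := Finset.mem_image.1 hs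
  have hfiber : ∀ y, {z | σ.SameCycle y z} = {z | σ.SameCycle x z} ↔ σ.SameCycle x y :=
    fun y => ⟨fun hy => (Set.ext_iff.1 hy y).1 (SameCycle.refl σ y), fun hxy => Set.ext fun z =>
      ⟨hxy.trans, hxy.symm.trans⟩⟩
  calc N ≤ {y | σ.SameCycle x y}.ncard := h x
    _ = _ := by
      rw [← Set.ncard_coe_finset]
      congr 1
      ext y
      simp [hfiber]

end Equiv.Perm

lemma SimpleGraph.card_dart_eq_two_mul_ncard_edgeSet {G : SimpleGraph V} [Finite V] :
    Nat.card G.Dart = 2 * G.edgeSet.ncard := by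
  classical
  have := Fintype.ofFinite V
  rw [Nat.card_eq_fintype_card, dart_card_eq_twice_card_edges, ← coe_edgeFinset,
    Set.ncard_coe_finset]

namespace RotationSystem

variable {G : SimpleGraph V} (rs : RotationSystem G)

lemma fst_facePerm (d : G.Dart) : (rs.facePerm d).fst = d.snd :=
  rs.tail_rot d.symm

lemma rot_ne_self {d : G.Dart} (hd : (G.neighborSet d.fst).Nontrivial) : rs.rot d ≠ d := by
  intro hfix
  obtain ⟨w, hw, hne⟩ := hd.exists_ne d.snd
  obtain ⟨k, hk⟩ := rs.single_cycle d ⟨(d.fst, w), hw⟩ rfl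
  rw [Equiv.Perm.zpow_apply_eq_self_of_apply_eq_self hfix k] at hk
  exact hne (congrArg (·.snd) hk).symm

lemma facePerm_ne_self (d : G.Dart) : rs.facePerm d ≠ d := fun h =>
  d.adj.ne (by simpa [h] using (rs.fst_facePerm d).symm)

lemma facePerm_facePerm_ne_self {d : G.Dart} (hd : (G.neighborSet d.snd).Nontrivial) :
    rs.facePerm (rs.facePerm d) ≠ d := by
  intro h
  have hsymm : rs.facePerm d = d.symm := by
    ext
    · exact rs.fst_facePerm d
    · simpa [h] using (rs.fst_facePerm (rs.facePerm d)).symm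
  exact rs.rot_ne_self (d := d.symm) hd hsymm

lemma facePerm_facePerm_facePerm_ne_self (hG : G.CliqueFree 3) (d : G.Dart) :
    rs.facePerm (rs.facePerm (rs.facePerm d)) ≠ d := by
  classical
  intro h
  set e := rs.facePerm d
  set g := rs.facePerm e
  have he : e.fst = d.snd := rs.fst_facePerm d
  have hg : g.fst = e.snd := rs.fst_facePerm e
  have hg' : g.snd = d.fst := by rw [← rs.fst_facePerm g, h]
  refine hG {d.fst, d.snd, e.snd} (is3Clique_triple_iff.2 ⟨d.adj, ?_, ?_⟩)
  · simpa [hg, hg'] using g.adj.symm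
  · simpa [he] using e.adj

lemma four_mul_numFaces_le [Finite V] (hdeg : ∀ v, (G.neighborSet v).Nontrivial)
    (hG : G.CliqueFree 3) : 4 * rs.numFaces ≤ Nat.card G.Dart := by
  have : Finite G.Dart := Finite.of_injective _ Dart.toProd_injective
  refine rs.facePerm.mul_ncard_range_sameCycle_le fun d => rs.facePerm.le_ncard_sameCycle ?_
  intro k hk0 hk4
  interval_cases k
  · exact rs.facePerm_ne_self d
  · simpa [sq] using rs.facePerm_facePerm_ne_self (hdeg d.snd)
  · simpa [pow_succ] using rs.facePerm_facePerm_facePerm_ne_self hG d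

lemma four_mul_eulerChar_le [Finite V] (hdeg : ∀ v, (G.neighborSet v).Nontrivial)
    (hG : G.CliqueFree 3) : 4 * rs.eulerChar ≤ 4 * Nat.card V - Nat.card G.Dart := by
  have hF := rs.four_mul_numFaces_le hdeg hG
  have hE := G.card_dart_eq_two_mul_ncard_edgeSet
  rw [eulerChar]
  omega

end RotationSystem

section LexProd

variable {α β : Type*} {X : SimpleGraph α}

lemma lexProd_bot_adj {p q : α × β} :
    (lexProd X (⊥ : SimpleGraph β)).Adj p q ↔ X.Adj p.1 q.1 :=
  or_iff_left (by simp)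

lemma cliqueFree_three_lexProd_bot (h : X.CliqueFree 3) :
    (lexProd X (⊥ : SimpleGraph β)).CliqueFree 3 := by
  classical
  intro s hs
  obtain ⟨a, b, c, hab, hac, hbc, rfl⟩ := is3Clique_iff.1 hs
  exact h {a.1, b.1, c.1} (is3Clique_triple_iff.2
    ⟨lexProd_bot_adj.1 hab, lexProd_bot_adj.1 hac, lexProd_bot_adj.1 hbc⟩)

lemma neighborSet_lexProd_nontrivial [Nontrivial β] {Y : SimpleGraph β} {a b : α}
    (h : X.Adj a b) (i : β) : ((lexProd X Y).neighborSet (a, i)).Nontrivial := by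
  obtain ⟨j, j', hj⟩ := exists_pair_ne β
  exact ⟨(b, j), Or.inl h, (b, j'), Or.inl h, by simpa using hj⟩

def lexProdLayer (X : SimpleGraph α) (Y : SimpleGraph β) (b : β) :
    X →g lexProd X Y :=
  ⟨(·, b), Or.inl⟩

def lexProdBotDartEquiv : (lexProd X (⊥ : SimpleGraph β)).Dart ≃ X.Dart × β × β where
  toFun d := (⟨(d.fst.1, d.snd.1), lexProd_bot_adj.1 d.adj⟩, d.fst.2, d.snd.2)
  invFun e := ⟨((e.1.fst, e.2.1), (e.1.snd, e.2.2)), lexProd_bot_adj.2 e.1.adj⟩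
  left_inv _ := rfl
  right_inv _ := rfl

lemma card_dart_lexProd_bot :
    Nat.card (lexProd X (⊥ : SimpleGraph β)).Dart = Nat.card X.Dart * Nat.card β ^ 2 := by
  rw [Nat.card_congr lexProdBotDartEquiv, Nat.card_prod, Nat.card_prod, sq]

end LexProd

section CycleGraph

lemma cycleGraph_adj_add_one {m : ℕ} (a : Fin (m + 2)) : (cycleGraph (m + 2)).Adj a (a + 1) :=
  cycleGraph_adj.2 (Or.inr (add_sub_cancel_left a 1))

lemma card_dart_cycleGraph (m : ℕ) : Nat.card (cycleGraph (m + 3)).Dart = 2 * (m + 3) := by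
  rw [Nat.card_eq_fintype_card, dart_card_eq_sum_degrees]
  simp [cycleGraph_degree_three_le, mul_comm]

open Fin.CommRing in
lemma cycleGraph_cliqueFree_three (m : ℕ) : (cycleGraph (m + 4)).CliqueFree 3 := by
  classical
  intro s hs
  obtain ⟨a, b, c, hab, hac, hbc, rfl⟩ := is3Clique_iff.1 hs
  have unit : ∀ {u v : Fin (m + 4)}, (cycleGraph (m + 4)).Adj u v → u - v = 1 ∨ u - v = -1 :=
    fun h => (cycleGraph_adj.1 h).imp id fun h => by rw [← neg_sub, h]
  have hsum : (a - b) + (b - c) + (c - a) = 0 := by ring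
  have h3 : (3 : Fin (m + 4)) ≠ 0 := by simp [Fin.ext_iff, Nat.mod_eq_of_lt]
  -- a sum of three terms `±1` is `±1` or `±3`, and neither vanishes modulo `m + 4`
  rcases unit hab with h | h <;> rcases unit hbc with h' | h' <;>
    rcases unit hac.symm with h'' | h'' <;> rw [h, h', h''] at hsum <;> ring_nf at hsum <;> simp_all

lemma cycleGraph_exists_path_to_zero {m : ℕ} (k : Fin (m + 2)) :
    ∃ p : (cycleGraph (m + 2)).Walk k 0, p.IsPath ∧ ∀ x ∈ p.support, x = 0 ∨ k ≤ x := by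
  suffices ∃ p : (cycleGraph (m + 2)).Walk k 0, ∀ x ∈ p.support, x = 0 ∨ k ≤ x by
    obtain ⟨p, hp⟩ := this
    exact ⟨p.bypass, p.bypass_isPath, fun x hx => hp x (p.support_bypass_subset_support hx)⟩
  induction k using Fin.reverseInduction with
  | last =>
    refine ⟨((cycleGraph_adj_add_one (Fin.last _)).toWalk).copy rfl (Fin.last_add_one _), ?_⟩
    simp
  | cast i ih =>
    obtain ⟨p, hp⟩ := ih
    refine ⟨Walk.cons (pathGraph_le_cycleGraph (pathGraph_adj.2 (Or.inl rfl))) p, ?_⟩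
    simp only [Walk.support_cons, List.mem_cons, forall_eq_or_imp, le_refl, or_true, true_and]
    exact fun x hx => (hp x hx).imp_right Fin.castSucc_lt_succ.le.trans

end CycleGraph

section Subdivision

open Function

variable {α γ β : Type*} {H : SimpleGraph α} {G : SimpleGraph β}

theorem containsSubdivision_of_interiors (f : α → β) (hf : f.Injective)
    (P : ∀ ⦃u v⦄, H.Adj u v → G.Walk (f u) (f v)) (hP : ∀ ⦃u v⦄ (h : H.Adj u v), (P h).IsPath)
    (I : Sym2 α → Set β) (hIf : ∀ e, Disjoint (I e) (Set.range f))
    (hI : Pairwise (Disjoint on I))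
    (hPI : ∀ ⦃u v⦄ (h : H.Adj u v), ∀ x ∈ (P h).support, x ∈ s(u, v).map f ∨ x ∈ I s(u, v)) :
    ContainsSubdivision H G := by
  have hbranch : ∀ ⦃u v⦄ (h : H.Adj u v) (x : β),
      x ∈ (P h).support → x ∈ Set.range f → x = f u ∨ x = f v := by
    intro u v h x hx hxf
    rcases hPI h x hx with hx | hx
    · simpa using hx
    · exact absurd hxf (Set.disjoint_left.1 (hIf _) hx)
  refine ⟨f, P, hf, hP, hbranch, fun u v u' v' h h' hne x hx hx' => ?_⟩
  suffices x ∈ Set.range f from ⟨hbranch h x hx this, hbranch h' x hx' this⟩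
  rcases hPI h x hx with hxf | hxI
  · obtain ⟨a, -, rfl⟩ := Sym2.mem_map.1 hxf
    exact Set.mem_range_self a
  rcases hPI h' x hx' with hxf | hxI'
  · obtain ⟨a, -, rfl⟩ := Sym2.mem_map.1 hxf
    exact Set.mem_range_self a
  · exact absurd hxI' (Set.disjoint_left.1 (hI hne) hxI)

namespace completeBipartiteGraph

variable {f : α ⊕ γ → β} (W : ∀ i j, G.Walk (f (.inl i)) (f (.inr j)))

def liftWalk : ∀ ⦃u v⦄, (completeBipartiteGraph α γ).Adj u v → G.Walk (f u) (f v)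
  | .inl i, .inr j, _ => W i j
  | .inr j, .inl i, _ => (W i j).reverse
  | .inl _, .inl _, h => absurd h (by simp)
  | .inr _, .inr _, h => absurd h (by simp)

variable {W}

lemma liftWalk_isPath (hW : ∀ i j, (W i j).IsPath) :
    ∀ ⦃u v⦄ (h : (completeBipartiteGraph α γ).Adj u v), (liftWalk W h).IsPath
  | .inl i, .inr j, _ => hW i j
  | .inr j, .inl i, _ => (hW i j).reverse
  | .inl _, .inl _, h => absurd h (by simp)
  | .inr _, .inr _, h => absurd h (by simp)

lemma forall_mem_support_liftWalk {Q : Sym2 (α ⊕ γ) → β → Prop}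
    (hW : ∀ i j, ∀ x ∈ (W i j).support, Q s(.inl i, .inr j) x) :
    ∀ ⦃u v⦄ (h : (completeBipartiteGraph α γ).Adj u v), ∀ x ∈ (liftWalk W h).support, Q s(u, v) x
  | .inl i, .inr j, _ => hW i j
  | .inr j, .inl i, _ => fun x hx => Sym2.eq_swap ▸ hW i j x (by simpa [liftWalk] using hx)
  | .inl _, .inl _, h => absurd h (by simp)
  | .inr _, .inr _, h => absurd h (by simp)

end completeBipartiteGraph

end Subdivision

section K33

lemma lexProd_cycleGraph_exists_path_three_zero (m : ℕ) :
    ∃ p : (lexProd (cycleGraph (m + 4)) (⊥ : SimpleGraph (Fin 2))).Walk (3, 0) (0, 0),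
      p.IsPath ∧ ∀ x ∈ p.support, x = (0, 0) ∨ x = (3, 0) ∨ 3 < x.1 := by
  obtain ⟨p, hp, hsupp⟩ : ∃ p : (cycleGraph (m + 4)).Walk 3 0,
      p.IsPath ∧ ∀ x ∈ p.support, x = 0 ∨ 3 ≤ x :=
    cycleGraph_exists_path_to_zero (m := m + 2) 3
  have hq : ∀ x ∈ (p.map (lexProdLayer _ (⊥ : SimpleGraph (Fin 2)) 0)).support,
      x = (0, 0) ∨ x = (3, 0) ∨ 3 < x.1 := by
    rw [Walk.support_map]
    intro x hx
    obtain ⟨y, hy, rfl⟩ := List.mem_map.1 hx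
    rcases hsupp y hy with rfl | h
    · exact Or.inl rfl
    · exact Or.inr ((eq_or_lt_of_le h).imp (fun h : 3 = y => h ▸ rfl) id)
  exact ⟨_, hp.map fun _ _ h => congrArg Prod.fst h, hq⟩

def k33Branch (m : ℕ) : Fin 3 ⊕ Fin 3 → Fin (m + 4) × Fin 2 :=
  Sum.elim ![(1, 0), (1, 1), (3, 0)] ![(0, 0), (2, 0), (2, 1)]

variable {m : ℕ}

lemma k33Branch_injective : (k33Branch m).Injective := by
  rintro (i | i) (j | j) h <;> fin_cases i <;> fin_cases j <;>
    simp_all [k33Branch, Fin.ext_iff, Nat.mod_eq_of_lt]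

lemma k33Branch_fst_le (u : Fin 3 ⊕ Fin 3) : (k33Branch m u).1 ≤ 3 := by
  rcases u with i | i <;> fin_cases i <;> simp [k33Branch, Fin.le_iff_val_le_val, Nat.mod_eq_of_lt]

open Fin.CommRing in
lemma k33Branch_adj {i j : Fin 3} (hij : (i, j) ≠ (2, 0)) :
    (lexProd (cycleGraph (m + 4)) (⊥ : SimpleGraph (Fin 2))).Adj
      (k33Branch m (.inl i)) (k33Branch m (.inr j)) := by
  rw [lexProd_bot_adj, cycleGraph_adj]
  fin_cases i <;> fin_cases j <;> first | exact absurd rfl hij | norm_num [k33Branch]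

def k33Walk (p : (lexProd (cycleGraph (m + 4)) (⊥ : SimpleGraph (Fin 2))).Walk (3, 0) (0, 0))
    (i j : Fin 3) :
    (lexProd (cycleGraph (m + 4)) (⊥ : SimpleGraph (Fin 2))).Walk
      (k33Branch m (.inl i)) (k33Branch m (.inr j)) :=
  if h : (i, j) = (2, 0) then
    p.copy (by cases h; rfl) (by cases h; rfl)
  else (k33Branch_adj h).toWalk

variable {p : (lexProd (cycleGraph (m + 4)) (⊥ : SimpleGraph (Fin 2))).Walk (3, 0) (0, 0)}

lemma k33Walk_isPath (hp : p.IsPath) (i j : Fin 3) : (k33Walk p i j).IsPath := by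
  unfold k33Walk
  split_ifs with h
  · cases h; exact hp
  · exact (k33Branch_adj h).isPath_toWalk

lemma k33Walk_support (hp : ∀ x ∈ p.support, x = (0, 0) ∨ x = (3, 0) ∨ 3 < x.1) (i j : Fin 3) :
    ∀ x ∈ (k33Walk p i j).support, x ∈ s(Sum.inl i, Sum.inr j).map (k33Branch m) ∨
      3 < x.1 ∧ s(Sum.inl i, Sum.inr j) = s(Sum.inl 2, Sum.inr 0) := by
  unfold k33Walk
  split_ifs with h
  · cases h
    intro x hx
    rcases hp x ((Walk.support_copy _ _ _).subst hx) with rfl | rfl | hx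
    · simp [k33Branch]
    · simp [k33Branch]
    · exact Or.inr ⟨hx, rfl⟩
  · simp

end K33

theorem containsSubdivision_K33_lexProd_cycleGraph (m : ℕ) :
    ContainsSubdivision (completeBipartiteGraph (Fin 3) (Fin 3))
      (lexProd (cycleGraph (m + 4)) (⊥ : SimpleGraph (Fin 2))) := by
  obtain ⟨p, hp, hsupp⟩ := lexProd_cycleGraph_exists_path_three_zero m
  refine containsSubdivision_of_interiors (k33Branch m) k33Branch_injective
    (completeBipartiteGraph.liftWalk (k33Walk p))
    (completeBipartiteGraph.liftWalk_isPath (k33Walk_isPath hp))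
    (fun e => {x | 3 < x.1 ∧ e = s(Sum.inl 2, Sum.inr 0)}) ?_ ?_
    (completeBipartiteGraph.forall_mem_support_liftWalk
      (Q := fun e x => x ∈ e.map (k33Branch m) ∨ 3 < x.1 ∧ e = s(Sum.inl 2, Sum.inr 0))
      (k33Walk_support hsupp))
  · intro e
    refine Set.disjoint_left.2 fun x hx ⟨u, hu⟩ => ?_
    exact (k33Branch_fst_le u).not_gt (hu ▸ hx.1)
  · exact fun e e' hne => Set.disjoint_left.2 fun x hx hx' => hne (hx.2.trans hx'.2.symm)

theorem lexProd_cycleGraph_not_planar (m : ℕ) :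
    ¬ ∃ rs : RotationSystem (lexProd (cycleGraph (m + 4)) (⊥ : SimpleGraph (Fin 2))),
      rs.eulerChar = 2 := by
  rintro ⟨rs, hrs⟩
  have h := rs.four_mul_eulerChar_le
    (fun v => neighborSet_lexProd_nontrivial (cycleGraph_adj_add_one (m := m + 2) v.1) v.2)
    (cliqueFree_three_lexProd_bot (cycleGraph_cliqueFree_three m))
  rw [hrs, card_dart_lexProd_bot, card_dart_cycleGraph (m + 1)] at h
  simp only [Nat.card_eq_fintype_card, Fintype.card_prod, Fintype.card_fin] at h
  omega

/-- for `n ≥ 4`, the graph `C_n[K̄_2]` contains a subdivision of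
`K_{3,3}`, and hence is not planar (has no 2-cell embedding of genus 0, i.e.
Euler characteristic 2). -/
theorem cycle_lexProd_contains_K33_subdivision (n : ℕ) (hn : 4 ≤ n) :
    ContainsSubdivision (completeBipartiteGraph (Fin 3) (Fin 3))
      (lexProd (SimpleGraph.cycleGraph n) (⊥ : SimpleGraph (Fin 2))) ∧
    ¬ ∃ rs : RotationSystem
        (lexProd (SimpleGraph.cycleGraph n) (⊥ : SimpleGraph (Fin 2))),
      rs.eulerChar = 2 := by
  obtain ⟨m, rfl⟩ : ∃ m, n = m + 4 := ⟨n - 4, by omega⟩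
  exact ⟨containsSubdivision_K33_lexProd_cycleGraph m, lexProd_cycleGraph_not_planar m⟩
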